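/- Let F be a field of characteristic 0, A a bialgebra over F with coproduct Δ, and h ∈ A a primitive element, i.e. Δ(h) = h ⊗ 1 + 1 ⊗ h. Then for every positive integer r, Δ(h^[r]) = ∑_{i=0}^{r} C(r,i) · h^[i] ⊗ h^[r−i] in A ⊗_F A, where C(r,i) is the ordinary binomial coefficient. (Lemma 2.4, main identity.) -/
import Mathlib


open scoped TensorProduct

/-- The shifted falling factorial `x_a^[n] = (x+a)(x+a−1)⋯(x+a−n+1)`;
`x^[n]` is the case `a = 0`. -/
def descFac {F : Type*} [Field F] {A : Type*} [Ring A] [Algebra F A]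
    (x : A) (a : F) : ℕ → A
  | 0 => 1
  | n + 1 => descFac x a n * (x + algebraMap F A (a - n))

lemma descFac_mul_self {F : Type*} [Field F] {A : Type*} [Ring A] [Algebra F A]
    (h : A) (n : ℕ) :
    descFac h (0 : F) n * h = descFac h (0 : F) (n + 1) + n • descFac h (0 : F) n := by
  have : descFac h (0 : F) (n + 1) = descFac h (0 : F) n * (h + algebraMap F A (0 - n)) := rfl
  rw [this, map_sub, map_zero, map_natCast, zero_sub, mul_add, mul_neg,
    (Nat.cast_commute n (descFac h (0 : F) n)).symm.eq, ← nsmul_eq_mul]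
  abel

lemma choose_sum_aux {M : Type*} [AddCommMonoid M] (n : ℕ) (f : ℕ → ℕ → M) :
    ∑ i ∈ Finset.range (n + 2), (n + 1).choose i • f i (n + 1 - i) =
      (∑ i ∈ Finset.range (n + 1), n.choose i • f (i + 1) (n - i)) +
      ∑ i ∈ Finset.range (n + 1), n.choose i • f i (n + 1 - i) := by
  rw [Finset.sum_range_succ' (fun i => (n + 1).choose i • f i (n + 1 - i)) (n + 1)]
  simp only [Nat.choose_succ_succ, add_smul, Nat.succ_sub_succ, Nat.choose_zero_right,
    Nat.sub_zero, one_smul, Finset.sum_add_distrib]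
  rw [Finset.sum_range_succ' (fun i => n.choose i • f i (n + 1 - i)) n]
  simp only [Nat.succ_sub_succ, Nat.choose_zero_right, Nat.sub_zero, one_smul]
  rw [Finset.sum_range_succ (fun i => n.choose (i + 1) • f (i + 1) (n - i)) n]
  simp only [Nat.choose_succ_self, zero_smul, add_zero]
  abel

/-- **Lemma 2.4, main identity**: if `h` is primitive then
`Δ(h^[r]) = ∑_{i=0}^{r} C(r,i) h^[i] ⊗ h^[r−i]` for every positive integer `r`. -/
theorem comul_descFac {F : Type*} [Field F] [CharZero F]
    {A : Type*} [Ring A] [Bialgebra F A] (h : A)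
    (hprim : Coalgebra.comul (R := F) h = h ⊗ₜ[F] 1 + 1 ⊗ₜ[F] h)
    (r : ℕ) (hr : 0 < r) :
    Coalgebra.comul (R := F) (descFac h (0 : F) r) =
      ∑ i ∈ Finset.range (r + 1),
        (r.choose i) • (descFac h (0 : F) i ⊗ₜ[F] descFac h (0 : F) (r - i)) := by
  clear hr
  induction r with
  | zero =>
      simp [descFac, Algebra.TensorProduct.one_def]
  | succ n ih =>
      have hstep : descFac h (0 : F) (n + 1) =
          descFac h (0 : F) n * (h + algebraMap F A (0 - n)) := rfl
      have key : ∀ i ≤ n,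
          (descFac h (0 : F) i ⊗ₜ[F] descFac h (0 : F) (n - i)) *
            (h ⊗ₜ[F] 1 + 1 ⊗ₜ[F] h + algebraMap F (A ⊗[F] A) (0 - n)) =
          descFac h (0 : F) (i + 1) ⊗ₜ[F] descFac h (0 : F) (n - i) +
            descFac h (0 : F) i ⊗ₜ[F] descFac h (0 : F) (n + 1 - i) := by
        intro i hin
        rw [map_sub, map_zero, map_natCast, zero_sub, mul_add, mul_add, mul_neg,
          (Nat.cast_commute (n : ℕ) _).symm.eq, ← nsmul_eq_mul,
          Algebra.TensorProduct.tmul_mul_tmul, Algebra.TensorProduct.tmul_mul_tmul,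
          mul_one, descFac_mul_self, descFac_mul_self,
          TensorProduct.add_tmul, TensorProduct.tmul_add,
          show n - i + 1 = n + 1 - i by omega]
        simp only [mul_one, ← TensorProduct.smul_tmul', TensorProduct.tmul_smul]
        have hsmul : i • (descFac h (0 : F) i ⊗ₜ[F] descFac h (0 : F) (n - i)) +
            (n - i) • (descFac h (0 : F) i ⊗ₜ[F] descFac h (0 : F) (n - i)) =
            n • (descFac h (0 : F) i ⊗ₜ[F] descFac h (0 : F) (n - i)) := by
          rw [← add_nsmul, Nat.add_sub_cancel' hin]
        rw [← hsmul]
        abel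
      rw [hstep, Bialgebra.comul_mul, ih, map_add, hprim, Bialgebra.comul_algebraMap,
        Finset.sum_mul]
      rw [show (n + 1 : ℕ) + 1 = n + 2 from rfl,
        choose_sum_aux n (fun i j => descFac h (0 : F) i ⊗ₜ[F] descFac h (0 : F) j),
        ← Finset.sum_add_distrib]
      refine Finset.sum_congr rfl fun i hi => ?_
      rw [smul_mul_assoc, key i (by simpa using Nat.lt_succ_iff.mp (Finset.mem_range.mp hi)),
        smul_add]
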